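/- arXiv:2208.00799 — 2 statements merged into one kernel-verified Lean document; each statement's English description precedes it below -/
import Mathlib

section
/- Let h : ℝⁿ → ℝ ∪ {∞} be proper, lower semicontinuous, and prox-bounded with threshold γ_h. If (zˡ) → z ∈ dom h, γˡ ↘ 0, z̄ˡ ∈ prox_{γˡ h}(zˡ), then the sequence (z̄ˡ) is bounded. -/
open Filter Topology

/-- `prox_{γ h}(x)`: the set of minimizers of `z ↦ h z + (1/(2γ))‖z - x‖²`. -/
noncomputable def prox {n : ℕ} (γ : ℝ) (h : EuclideanSpace ℝ (Fin n) → EReal)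
    (x : EuclideanSpace ℝ (Fin n)) : Set (EuclideanSpace ℝ (Fin n)) :=
  {z | ∀ w, h z + ((1 / (2 * γ) * ‖z - x‖ ^ 2 : ℝ) : EReal)
          ≤ h w + ((1 / (2 * γ) * ‖w - x‖ ^ 2 : ℝ) : EReal)}

/-!
Testing the prox optimality of `z̄ˡ` against the point `z` gives
`h z̄ˡ + ‖z̄ˡ - zˡ‖² / (2γˡ) ≤ h z + ‖z - zˡ‖² / (2γˡ)`, while prox-boundedness gives
`h z̄ˡ ≥ M - ‖z̄ˡ‖² / (2γ₀)`. Once `4γˡ ≤ γ₀`, which holds eventually since `γˡ → 0`, the term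
`γˡ ‖z̄ˡ‖² / γ₀ ≤ (‖z̄ˡ - zˡ‖² + ‖zˡ‖²) / 2` is absorbed by the left-hand side, so `‖z̄ˡ - zˡ‖` is
bounded in terms of `‖z - zˡ‖`, `‖zˡ‖` and `h z - M`, all bounded along the convergent `(zˡ)`.
-/

theorem EReal.add_le_toReal_add_of_le_add_of_add_le {u v : EReal} {M a b c : ℝ}
    (hu : (M : EReal) ≤ u + c) (huv : u + a ≤ v + b) (hv : v ≠ ⊤) :
    M + a ≤ v.toReal + b + c := by
  induction u using EReal.rec <;> induction v using EReal.rec <;> simp_all [← EReal.coe_add]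
  linarith

theorem norm_sub_sq_le_of_mem_prox {n : ℕ} {h : EuclideanSpace ℝ (Fin n) → EReal} {γ₀ M γ : ℝ}
    (hM : ∀ y, (M : EReal) ≤ h y + ((1 / (2 * γ₀) * ‖y‖ ^ 2 : ℝ) : EReal))
    (hγ : 0 < γ) (hγγ₀ : 4 * γ ≤ γ₀) {x p w : EuclideanSpace ℝ (Fin n)}
    (hp : p ∈ prox γ h x) (hw : h w ≠ ⊤) :
    ‖p - x‖ ^ 2 ≤ 2 * ‖w - x‖ ^ 2 + 4 * γ * ((h w).toReal - M) + ‖x‖ ^ 2 := by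
  have hγ₀ : 0 < γ₀ := by linarith
  have hopt := EReal.add_le_toReal_add_of_le_add_of_add_le (hM p) (hp w) hw
  have habsorb : γ / γ₀ * ‖p‖ ^ 2 ≤ (‖p - x‖ ^ 2 + ‖x‖ ^ 2) / 2 :=
    calc γ / γ₀ * ‖p‖ ^ 2 ≤ 1 / 4 * (‖p - x‖ + ‖x‖) ^ 2 := by
          gcongr ?_ * ?_ ^ 2
          · rw [div_le_iff₀ hγ₀]; linarith
          · exact norm_le_norm_sub_add p x
      _ ≤ (‖p - x‖ ^ 2 + ‖x‖ ^ 2) / 2 := by nlinarith [sq_nonneg (‖p - x‖ - ‖x‖)]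
  have hscaled : 2 * γ * M + ‖p - x‖ ^ 2 ≤
      2 * γ * (h w).toReal + ‖w - x‖ ^ 2 + γ / γ₀ * ‖p‖ ^ 2 := by
    have := mul_le_mul_of_nonneg_left hopt (by positivity : (0:ℝ) ≤ 2 * γ)
    field_simp at this ⊢
    linarith
  linarith

theorem prox_bounded_of_stepsize_tendsto_zero_general {n : ℕ}
    (h : EuclideanSpace ℝ (Fin n) → EReal)
    (hpb : ∃ γ > (0:ℝ), ∃ M : ℝ, ∀ x, (M : EReal) ≤ h x + ((1 / (2 * γ) * ‖x‖ ^ 2 : ℝ) : EReal))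
    (z : EuclideanSpace ℝ (Fin n)) (hz : h z ≠ ⊤)
    (zs : ℕ → EuclideanSpace ℝ (Fin n)) (hzs : Tendsto zs atTop (𝓝 z))
    (γ : ℕ → ℝ) (hγpos : ∀ l, 0 < γ l)
    (hγ0 : Tendsto γ atTop (𝓝 0))
    (zb : ℕ → EuclideanSpace ℝ (Fin n)) (hzb : ∀ l, zb l ∈ prox (γ l) h (zs l)) :
    ∃ R : ℝ, ∀ l, ‖zb l‖ ≤ R := by
  obtain ⟨γ₀, hγ₀, M, hM⟩ := hpb
  obtain ⟨K, hK⟩ := hzs.norm.bddAbove_range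
  replace hK : ∀ l, ‖zs l‖ ≤ K := fun l => hK ⟨l, rfl⟩
  set C := 2 * (‖z‖ + K) ^ 2 + γ₀ * |(h z).toReal - M| + K ^ 2
  have hsmall : ∀ᶠ l in atTop, 4 * γ l ≤ γ₀ :=
    (hγ0.const_mul 4).eventually_le_const (by simpa using hγ₀)
  have hbound : ∀ᶠ l in atTop, ‖zb l‖ ≤ K + √C := hsmall.mono fun l hl => by
    have hdist : ‖z - zs l‖ ≤ ‖z‖ + K := (norm_sub_le _ _).trans (by linarith [hK l])
    have hsq : ‖zb l - zs l‖ ^ 2 ≤ C := by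
      calc ‖zb l - zs l‖ ^ 2
          ≤ 2 * ‖z - zs l‖ ^ 2 + 4 * γ l * ((h z).toReal - M) + ‖zs l‖ ^ 2 :=
            norm_sub_sq_le_of_mem_prox hM (hγpos l) hl (hzb l) hz
        _ ≤ C := by
            have hstep : 4 * γ l * ((h z).toReal - M) ≤ γ₀ * |(h z).toReal - M| :=
              (mul_le_mul_of_nonneg_left (le_abs_self _) (by linarith [hγpos l])).trans
                (mul_le_mul_of_nonneg_right hl (abs_nonneg _))
            linarith [pow_le_pow_left₀ (norm_nonneg _) hdist 2,
              pow_le_pow_left₀ (norm_nonneg _) (hK l) 2]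
    calc ‖zb l‖ ≤ ‖zs l‖ + ‖zb l - zs l‖ := norm_le_norm_add_norm_sub' _ _
      _ ≤ K + √C := add_le_add (hK l) (Real.le_sqrt_of_sq_le hsq)
  obtain ⟨R, hR⟩ := (isBoundedUnder_of_eventually_le hbound).bddAbove_range
  exact ⟨R, fun l => hR ⟨l, rfl⟩⟩

/-- if `h` is proper, lsc and prox-bounded, `zˡ → z ∈ dom h`, `γˡ ↘ 0`, and
`z̄ˡ ∈ prox_{γˡ h}(zˡ)`, then the sequence `(z̄ˡ)` is bounded. -/
theorem prox_bounded_of_stepsize_tendsto_zero {n : ℕ}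
    (h : EuclideanSpace ℝ (Fin n) → EReal)
    (hproper : (∀ x, h x ≠ ⊥) ∧ ∃ x, h x ≠ ⊤)
    (hlsc : LowerSemicontinuous h)
    (hpb : ∃ γ > (0:ℝ), ∃ M : ℝ, ∀ x, (M : EReal) ≤ h x + ((1 / (2 * γ) * ‖x‖ ^ 2 : ℝ) : EReal))
    (z : EuclideanSpace ℝ (Fin n)) (hz : h z ≠ ⊤)
    (zs : ℕ → EuclideanSpace ℝ (Fin n)) (hzs : Tendsto zs atTop (𝓝 z))
    (γ : ℕ → ℝ) (hγpos : ∀ l, 0 < γ l) (hγanti : Antitone γ)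
    (hγ0 : Tendsto γ atTop (𝓝 0))
    (zb : ℕ → EuclideanSpace ℝ (Fin n)) (hzb : ∀ l, zb l ∈ prox (γ l) h (zs l)) :
    ∃ R : ℝ, ∀ l, ‖zb l‖ ≤ R :=
  prox_bounded_of_stepsize_tendsto_zero_general h hpb z hz zs hzs γ hγpos hγ0 zb hzb
end

section
/- Let U ⊆ ℝⁿ be open and f : U → ℝ be continuously differentiable with locally Lipschitz gradient on U. Then for every compact set Ω ⊂ U there exists L ≥ 0 such that f(z') ≤ f(z) + ⟨∇f(z), z' - z⟩ + (L/2)‖z' - z‖² for all z, z' ∈ Ω. -/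
/-!
Pick `δ > 0` with `cthickening δ Ω ⊆ U`. The gradient is Lipschitz (constant `K`) on this compact
thickening, so for `‖z' - z‖ ≤ δ` the segment `[z, z']` lies in it and the mean value inequality
bounds the first-order remainder by `K ‖z' - z‖²`. For `‖z' - z‖ > δ`, the remainder is bounded by
a constant `B` on the compact set `Ω × Ω`, and `B ≤ (B / δ²) ‖z' - z‖²`.
-/

open Filter Topology Metric Set InnerProductSpace
open scoped NNReal RealInnerProductSpace

lemma norm_image_sub_sub_le_of_lipschitzOnWith_segment {E F : Type*} [NormedAddCommGroup E]
    [NormedSpace ℝ E] [NormedAddCommGroup F] [NormedSpace ℝ F] {f : E → F}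
    {f' : E → E →L[ℝ] F} {x y : E} {K : ℝ≥0}
    (hf : ∀ w ∈ segment ℝ x y, HasFDerivWithinAt f (f' w) (segment ℝ x y) w)
    (hK : LipschitzOnWith K f' (segment ℝ x y)) :
    ‖f y - f x - f' x (y - x)‖ ≤ K * ‖y - x‖ ^ 2 := by
  have bound : ∀ w ∈ segment ℝ x y, ‖f' w - f' x‖ ≤ K * ‖y - x‖ := fun w hw => by
    rw [← dist_eq_norm]
    calc dist (f' w) (f' x) ≤ K * dist w x := hK.dist_le_mul w hw x (left_mem_segment ℝ x y)
      _ ≤ K * ‖y - x‖ := by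
        rw [dist_eq_norm]
        gcongr
        exact norm_sub_le_of_mem_segment hw
  calc ‖f y - f x - f' x (y - x)‖ ≤ K * ‖y - x‖ * ‖y - x‖ :=
        (convex_segment x y).norm_image_sub_le_of_norm_hasFDerivWithin_le' hf bound
          (left_mem_segment ℝ x y) (right_mem_segment ℝ x y)
    _ = K * ‖y - x‖ ^ 2 := by ring

section InnerProductSpace

variable {E : Type*} [NormedAddCommGroup E] [InnerProductSpace ℝ E]

lemma sub_sub_inner_gradient_le_of_lipschitzOnWith_segment [CompleteSpace E] {f : E → ℝ}
    {x y : E} {K : ℝ≥0} (hf : ∀ w ∈ segment ℝ x y, DifferentiableAt ℝ f w)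
    (hK : LipschitzOnWith K (gradient f) (segment ℝ x y)) :
    f y - f x - ⟪gradient f x, y - x⟫_ℝ ≤ K * ‖y - x‖ ^ 2 := by
  have hf' : ∀ w ∈ segment ℝ x y,
      HasFDerivWithinAt f (toDual ℝ E (gradient f w)) (segment ℝ x y) w := fun w hw =>
    (hasGradientAt_iff_hasFDerivAt.1 (hf w hw).hasGradientAt).hasFDerivWithinAt
  have hK' : LipschitzOnWith K (fun w => toDual ℝ E (gradient f w)) (segment ℝ x y) := by
    simpa using (toDual ℝ E).lipschitz.comp_lipschitzOnWith hK
  exact (le_abs_self _).trans (norm_image_sub_sub_le_of_lipschitzOnWith_segment hf' hK')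

lemma ContinuousOn.sub_sub_inner {f : E → ℝ} {g : E → E} {s : Set E} (hf : ContinuousOn f s)
    (hg : ContinuousOn g s) :
    ContinuousOn (Function.uncurry fun x y => f y - f x - ⟪g x, y - x⟫_ℝ) (s ×ˢ s) := by
  have hfst : MapsTo Prod.fst (s ×ˢ s) s := fun p hp => hp.1
  have hsnd : MapsTo Prod.snd (s ×ˢ s) s := fun p hp => hp.2
  exact ((hf.comp continuousOn_snd hsnd).sub (hf.comp continuousOn_fst hfst)).sub
    ((hg.comp continuousOn_fst hfst).inner (continuousOn_snd.sub continuousOn_fst))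

end InnerProductSpace

lemma IsCompact.exists_le_mul_dist_sq_of_le_mul_dist_sq_near {α : Type*} [PseudoMetricSpace α]
    {s : Set α} (hs : IsCompact s) {r : α → α → ℝ}
    (hr : ContinuousOn (Function.uncurry r) (s ×ˢ s)) {δ : ℝ} (hδ : 0 < δ) {K : ℝ≥0}
    (hnear : ∀ x ∈ s, ∀ y ∈ s, dist y x ≤ δ → r x y ≤ K * dist y x ^ 2) :
    ∃ L : ℝ, 0 ≤ L ∧ ∀ x ∈ s, ∀ y ∈ s, r x y ≤ L * dist y x ^ 2 := by
  obtain ⟨B₀, hB₀⟩ := (hs.prod hs).exists_bound_of_continuousOn hr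
  set B := max B₀ 0
  have hB : 0 ≤ B := le_max_right _ _
  refine ⟨K + B / δ ^ 2, by positivity, fun x hx y hy => ?_⟩
  have hrB : r x y ≤ B := (le_abs_self _).trans ((hB₀ (x, y) ⟨hx, hy⟩).trans (le_max_left _ _))
  rcases le_or_gt (dist y x) δ with hyx | hyx
  · nlinarith [hnear x hx y hy hyx, sq_nonneg (dist y x), div_nonneg hB (sq_nonneg δ)]
  · have hBfar : B ≤ B / δ ^ 2 * dist y x ^ 2 := by
      rw [div_mul_eq_mul_div, le_div_iff₀ (by positivity)]
      gcongr
    nlinarith [sq_nonneg (dist y x), K.coe_nonneg]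

/-- if `f` is `C¹` on an open set `U` with locally Lipschitz gradient, then on every
compact `Ω ⊆ U` there is `L ≥ 0` such that the descent-lemma quadratic upper bound
`f z' ≤ f z + ⟨∇f z, z' - z⟩ + (L/2)‖z' - z‖²` holds for all `z, z' ∈ Ω`. -/
theorem descent_lemma_on_compact {n : ℕ}
    (U : Set (EuclideanSpace ℝ (Fin n))) (hU : IsOpen U)
    (f : EuclideanSpace ℝ (Fin n) → ℝ)
    (hf : ContDiffOn ℝ 1 f U)
    (hlip : ∀ x ∈ U, ∃ K : NNReal, ∃ s ∈ 𝓝 x, LipschitzOnWith K (gradient f) s)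
    (Ω : Set (EuclideanSpace ℝ (Fin n))) (hΩc : IsCompact Ω) (hΩU : Ω ⊆ U) :
    ∃ L : ℝ, 0 ≤ L ∧ ∀ z ∈ Ω, ∀ z' ∈ Ω,
      f z' ≤ f z + (inner ℝ (gradient f z) (z' - z) : ℝ) + L / 2 * ‖z' - z‖ ^ 2 := by
  obtain ⟨δ, hδ, hδU⟩ := hΩc.exists_cthickening_subset_open hU hΩU
  have hloc : LocallyLipschitzOn U (gradient f) := fun x hx =>
    let ⟨K, s, hs, hK⟩ := hlip x hx
    ⟨K, s, mem_nhdsWithin_of_mem_nhds hs, hK⟩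
  obtain ⟨K, hK⟩ := (hloc.mono hδU).exists_lipschitzOnWith_of_compact hΩc.cthickening
  have hdiff : ∀ x ∈ U, DifferentiableAt ℝ f x := fun x hx =>
    (hf.differentiableOn one_ne_zero x hx).differentiableAt (hU.mem_nhds hx)
  have hcont := (hf.continuousOn.mono hΩU).sub_sub_inner
    (hK.continuousOn.mono (self_subset_cthickening Ω))
  obtain ⟨L, hL, hLΩ⟩ := hΩc.exists_le_mul_dist_sq_of_le_mul_dist_sq_near hcont hδ (K := K)
    fun z hz z' hz' hzz' => by
      have hseg : segment ℝ z z' ⊆ cthickening δ Ω :=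
        (segment_subset_closedBall_left z z').trans <|
          (closedBall_subset_closedBall (dist_comm z z' ▸ hzz')).trans
            (closedBall_subset_cthickening hz δ)
      rw [dist_eq_norm]
      exact sub_sub_inner_gradient_le_of_lipschitzOnWith_segment
        (fun w hw => hdiff w (hδU (hseg hw))) (hK.mono hseg)
  refine ⟨2 * L, by positivity, fun z hz z' hz' => ?_⟩
  have := hLΩ z hz z' hz'
  rw [dist_eq_norm] at this
  linarith
end
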